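/- Under rPGD with AAᵀ = I and η = 1/g_t²: 1 − ‖A w_{t+1}‖² = (1 − ‖A w_t‖²)/‖v_t‖². In particular, since ‖w^⊥‖² = 1 − ‖Aw‖² for unit vectors w, the orthogonal component shrinks by factor 1/‖v_t‖². -/

import Mathlib

set_option autoImplicit false

open RealInnerProductSpace

/-! Since `A Aᵀ = I`, the map `Aᵀ A` is the orthogonal projection onto the row space, so
`‖x‖² - ‖A x‖² = ‖x - Aᵀ A x‖²` for every `x`. The gradient step only adds a vector of the
row space, so `v - Aᵀ A v = w - Aᵀ A w`, and both sides of the identity equal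
`‖w - Aᵀ A w‖² / ‖v‖²`. The iterate `v` is nonzero because `A v = (g*/g_t) A w* ≠ 0`. -/

lemma ContinuousLinearMap.apply_ne_zero_of_mem_ker_orthogonal {E F : Type*}
    [NormedAddCommGroup E] [InnerProductSpace ℝ E] [NormedAddCommGroup F] [Module ℝ F]
    [TopologicalSpace F] {A : E →L[ℝ] F} {x : E}
    (hx : x ∈ (LinearMap.ker (A : E →ₗ[ℝ] F))ᗮ) (hx₀ : x ≠ 0) : A x ≠ 0 := fun h =>
  hx₀ ((Submodule.orthogonal_disjoint _).le_bot ⟨h, hx⟩)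

namespace ContinuousLinearMap

variable {E F : Type*} [NormedAddCommGroup E] [InnerProductSpace ℝ E] [CompleteSpace E]
  [NormedAddCommGroup F] [InnerProductSpace ℝ F] [CompleteSpace F]
  {A : E →L[ℝ] F}

lemma apply_adjoint_apply_of_comp_adjoint_eq_id
    (hA : A.comp (adjoint A) = ContinuousLinearMap.id ℝ F) (y : F) :
    A (adjoint A y) = y :=
  congr($hA y)

lemma norm_adjoint_apply_of_comp_adjoint_eq_id
    (hA : A.comp (adjoint A) = ContinuousLinearMap.id ℝ F) (y : F) :
    ‖adjoint A y‖ = ‖y‖ := by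
  have h : ‖adjoint A y‖ ^ 2 = ‖y‖ ^ 2 := by
    rw [← real_inner_self_eq_norm_sq, adjoint_inner_left,
      apply_adjoint_apply_of_comp_adjoint_eq_id hA, real_inner_self_eq_norm_sq]
  exact (sq_eq_sq₀ (norm_nonneg _) (norm_nonneg _)).mp h

lemma norm_sq_sub_norm_sq_apply_of_comp_adjoint_eq_id
    (hA : A.comp (adjoint A) = ContinuousLinearMap.id ℝ F) (x : E) :
    ‖x‖ ^ 2 - ‖A x‖ ^ 2 = ‖x - adjoint A (A x)‖ ^ 2 := by
  rw [norm_sub_sq_real, norm_adjoint_apply_of_comp_adjoint_eq_id hA, adjoint_inner_right,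
    real_inner_self_eq_norm_sq]
  ring

lemma sub_adjoint_apply_of_comp_adjoint_eq_id
    (hA : A.comp (adjoint A) = ContinuousLinearMap.id ℝ F) (w : E) (y : F) :
    (w - adjoint A y) - adjoint A (A (w - adjoint A y)) = w - adjoint A (A w) := by
  rw [map_sub A, apply_adjoint_apply_of_comp_adjoint_eq_id hA, map_sub]
  abel

lemma one_sub_norm_sq_apply_normalize_of_comp_adjoint_eq_id
    (hA : A.comp (adjoint A) = ContinuousLinearMap.id ℝ F) {w : E} (hw : ‖w‖ = 1) (y : F)
    (hv : w - adjoint A y ≠ 0) :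
    1 - ‖A (‖w - adjoint A y‖⁻¹ • (w - adjoint A y))‖ ^ 2 =
      (1 - ‖A w‖ ^ 2) / ‖w - adjoint A y‖ ^ 2 := by
  set v := w - adjoint A y
  have key : ‖v‖ ^ 2 - ‖A v‖ ^ 2 = 1 - ‖A w‖ ^ 2 := by
    rw [norm_sq_sub_norm_sq_apply_of_comp_adjoint_eq_id hA,
      sub_adjoint_apply_of_comp_adjoint_eq_id hA,
      ← norm_sq_sub_norm_sq_apply_of_comp_adjoint_eq_id hA, hw, one_pow]
  have hv₀ : ‖v‖ ≠ 0 := norm_ne_zero_iff.mpr hv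
  rw [← key, map_smul, norm_smul, norm_inv, norm_norm]
  field_simp

end ContinuousLinearMap

/-- Under rPGD with `AAᵀ = I` and `η = 1/g_t²`:
`1 − ‖A w_{t+1}‖² = (1 − ‖A w_t‖²)/‖v_t‖²`; i.e. the orthogonal component
(`‖w^⊥‖² = 1 − ‖Aw‖²` for unit vectors `w`) shrinks by the factor `1/‖v_t‖²`. -/
theorem stmt14 (m d : ℕ)
    (A : EuclideanSpace ℝ (Fin d) →L[ℝ] EuclideanSpace ℝ (Fin m))
    (hA : A.comp (ContinuousLinearMap.adjoint A) =
      ContinuousLinearMap.id ℝ (EuclideanSpace ℝ (Fin m)))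
    (gstar : ℝ) (hgs : 0 < gstar)
    (wstar : EuclideanSpace ℝ (Fin d)) (hws : ‖wstar‖ = 1)
    (hwsrow : wstar ∈ (LinearMap.ker (A : EuclideanSpace ℝ (Fin d) →ₗ[ℝ] EuclideanSpace ℝ (Fin m)))ᗮ)
    (w : EuclideanSpace ℝ (Fin d)) (hw : ‖w‖ = 1)
    (gt : ℝ) (hgt : gt ≠ 0)
    (v : EuclideanSpace ℝ (Fin d))
    (hv : v = w - gt⁻¹ • (ContinuousLinearMap.adjoint A) (A (gt • w - gstar • wstar))) :
    1 - ‖A (‖v‖⁻¹ • v)‖^2 = (1 - ‖A w‖^2) / ‖v‖^2 := by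
  rw [← map_smul] at hv
  have hAv : A v = (gstar / gt) • A wstar := by
    rw [hv, map_sub, ContinuousLinearMap.apply_adjoint_apply_of_comp_adjoint_eq_id hA, map_sub,
      map_smul, map_smul, smul_sub, smul_smul, smul_smul, inv_mul_cancel₀ hgt, one_smul,
      sub_sub_cancel, div_eq_inv_mul]
  have hAwstar : A wstar ≠ 0 :=
    ContinuousLinearMap.apply_ne_zero_of_mem_ker_orthogonal hwsrow (by rintro rfl; simp at hws)
  have hv₀ : v ≠ 0 := by
    rintro rfl
    exact smul_ne_zero (div_ne_zero hgs.ne' hgt) hAwstar (by simpa using hAv.symm)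
  subst hv
  exact ContinuousLinearMap.one_sub_norm_sq_apply_normalize_of_comp_adjoint_eq_id hA hw _ hv₀
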